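/- arXiv:2009.04498 — 4 statements merged into one kernel-verified Lean document; each statement's English description precedes it below -/
import Mathlib

section
/- Let F be an entire function on ℂⁿ that vanishes on the set H^n = ⋃_{m=1}^n H^n_m, where H^n_m = {z ∈ ℂⁿ : z_m ∈ ℤ}. Then there exists an entire function G on ℂⁿ such that F(z) = G(z)·∏_{k=1}^n sin(π z_k) for all z ∈ ℂⁿ. -/
/-!
Dividing by one factor `sin (π z_m)` at a time, it suffices to divide an entire function
`F (w, y)` of `w : ℂ` and a parameter `y ∈ ℂⁿ` by `φ w`, where `φ` is entire with only simple
zeros. Near a zero `c` of `φ` one divides by `w - c` instead: the difference quotient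
`(F (w, y) - F (c, y)) / (w - c)` is entire in `w`, so it equals its Cauchy integral over a large
circle, and that integral is holomorphic in `(w, y)` by differentiation under the integral sign,
the `y`-derivatives of the integrand being locally bounded by the Cauchy estimate.
The vanishing on the remaining hyperplanes passes to the quotient by continuity, because the
zeros of `sin (π w)` have empty interior.
-/

open Metric Complex Set Filter Topology MeasureTheory ContinuousLinearMap
open scoped Real

section Slices

variable {E : Type*} [NormedAddCommGroup E] [NormedSpace ℂ E]

theorem hasFDerivAt_sub_inv_mul {g : E → ℂ} {g' : E →L[ℂ] ℂ} {ζ : ℂ} {q : ℂ × E}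
    (hq : q.1 ≠ ζ) (hg : HasFDerivAt g g' q.2) :
    HasFDerivAt (fun p : ℂ × E => (ζ - p.1)⁻¹ * g p.2)
      ((ζ - q.1)⁻¹ • g'.comp (snd ℂ ℂ E) + g q.2 • ((ζ - q.1) ^ 2)⁻¹ • fst ℂ ℂ E) q := by
  have hinv : HasFDerivAt (fun p : ℂ × E => (ζ - p.1)⁻¹) (((ζ - q.1) ^ 2)⁻¹ • fst ℂ ℂ E) q := by
    have := (hasDerivAt_inv (sub_ne_zero.2 hq.symm)).comp_hasFDerivAt q
      ((hasFDerivAt_fst (𝕜 := ℂ) (p := q)).const_sub ζ)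
    rwa [neg_smul_neg] at this
  exact hinv.mul (hg.comp q hasFDerivAt_snd)

theorem norm_fderiv_le_of_forall_mem_ball_norm_le {F : Type*} [NormedAddCommGroup F]
    [NormedSpace ℂ F] {f : E → F} {x : E} {r M : ℝ} (hr : 0 < r)
    (hf : DifferentiableOn ℂ f (ball x r)) (hM : ∀ y ∈ ball x r, ‖f y‖ ≤ M) :
    ‖fderiv ℂ f x‖ ≤ 2 * M / r := by
  refine norm_fderiv_le_div_of_mapsTo_ball hf (fun y hy => ?_) hr
  rw [mem_closedBall, two_mul]
  exact (dist_le_norm_add_norm _ _).trans (add_le_add (hM y hy) (hM x (mem_ball_self hr)))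

theorem norm_inv_smul_comp_snd_add_smul_fst_le {a g : ℂ} {L : E →L[ℂ] ℂ} {ρ C M : ℝ}
    (hρ : 0 < ρ) (ha : ρ ≤ ‖a‖) (hL : ‖L‖ ≤ C) (hg : ‖g‖ ≤ M) :
    ‖a⁻¹ • L.comp (snd ℂ ℂ E) + g • (a ^ 2)⁻¹ • fst ℂ ℂ E‖ ≤ ρ⁻¹ * C + M * (ρ ^ 2)⁻¹ := by
  have h₁ : ‖a⁻¹‖ ≤ ρ⁻¹ := by rw [norm_inv]; exact inv_anti₀ hρ ha
  have h₂ : ‖(a ^ 2)⁻¹‖ ≤ (ρ ^ 2)⁻¹ := by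
    rw [norm_inv, norm_pow]; exact inv_anti₀ (by positivity) (pow_le_pow_left₀ hρ.le ha 2)
  have hsnd : ‖L.comp (snd ℂ ℂ E)‖ ≤ C :=
    (opNorm_comp_le _ _).trans <| (mul_le_mul hL (norm_snd_le ℂ ℂ E) (norm_nonneg _)
      ((norm_nonneg _).trans hL)).trans_eq (mul_one _)
  have hfst : ‖(a ^ 2)⁻¹ • fst ℂ ℂ E‖ ≤ (ρ ^ 2)⁻¹ := by
    rw [norm_smul]
    exact (mul_le_mul h₂ (norm_fst_le ℂ ℂ E) (norm_nonneg _) (by positivity)).trans_eq (mul_one _)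
  refine (norm_add_le _ _).trans (add_le_add ?_ ?_) <;> rw [norm_smul]
  · exact mul_le_mul h₁ hsnd (norm_nonneg _) (by positivity)
  · exact mul_le_mul hg hfst (norm_nonneg _) ((norm_nonneg _).trans hg)

theorem exists_norm_le_and_norm_fderiv_le_of_continuousOn [ProperSpace E] {G : ℂ × E → ℂ}
    {c : ℂ} {R : ℝ}
    (hcont : ContinuousOn G (sphere c R ×ˢ univ))
    (hdiff : ∀ ζ ∈ sphere c R, Differentiable ℂ fun y => G (ζ, y)) (y₀ : E) {ρ : ℝ} (hρ : 0 < ρ) :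
    ∃ M, ∀ ζ ∈ sphere c R, ∀ y ∈ ball y₀ ρ,
      ‖G (ζ, y)‖ ≤ M ∧ ‖fderiv ℂ (fun y => G (ζ, y)) y‖ ≤ 2 * M / ρ := by
  have hK := (isCompact_sphere c R).prod (isCompact_closedBall y₀ (2 * ρ))
  obtain ⟨M, hM⟩ := hK.exists_bound_of_continuousOn
    (hcont.mono (prod_mono subset_rfl (subset_univ _)))
  refine ⟨M, fun ζ hζ y hy => ⟨hM _ ⟨hζ, ?_⟩, ?_⟩⟩
  · rw [mem_closedBall]; linarith [mem_ball.1 hy]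
  · refine norm_fderiv_le_of_forall_mem_ball_norm_le hρ (hdiff ζ hζ).differentiableOn
      fun y' hy' => hM _ ⟨hζ, ?_⟩
    rw [mem_closedBall]
    linarith [dist_triangle y' y y₀, mem_ball.1 hy, mem_ball.1 hy']

theorem aestronglyMeasurable_fderiv_of_continuous_uncurry [FiniteDimensional ℂ E]
    {f : ℝ → E → ℂ} (hf : Continuous (Function.uncurry f)) (y : E) (μ : Measure ℝ) :
    AEStronglyMeasurable (fun θ => fderiv ℂ (f θ) y) μ := by
  borelize E (E →L[ℂ] ℂ)
  exact ((measurable_fderiv_with_param ℂ hf).comp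
    (measurable_id.prodMk measurable_const)).aestronglyMeasurable

theorem differentiableAt_intervalIntegral_of_continuous {Ψ : E → ℝ → ℂ}
    {Ψ' : E → ℝ → E →L[ℂ] ℂ} {x₀ : E} {s : Set E} {a b C : ℝ} (hs : s ∈ 𝓝 x₀)
    (hcont : ∀ x ∈ s, Continuous (Ψ x))
    (hmeas : AEStronglyMeasurable (Ψ' x₀) (volume.restrict (uIoc a b)))
    (hbound : ∀ θ, ∀ x ∈ s, ‖Ψ' x θ‖ ≤ C)
    (hderiv : ∀ θ, ∀ x ∈ s, HasFDerivAt (fun x => Ψ x θ) (Ψ' x θ) x) :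
    DifferentiableAt ℂ (fun x => ∫ θ in a..b, Ψ x θ) x₀ :=
  (intervalIntegral.hasFDerivAt_integral_of_dominated_of_fderiv_le hs
    (eventually_of_mem hs fun x hx => (hcont x hx).aestronglyMeasurable)
    ((hcont _ (mem_of_mem_nhds hs)).intervalIntegrable _ _) hmeas
    (ae_of_all _ fun θ _ => hbound θ) intervalIntegrable_const
    (ae_of_all _ fun θ _ => hderiv θ)).differentiableAt

variable [FiniteDimensional ℂ E]

theorem differentiableAt_circleIntegral_sub_inv_mul {G : ℂ × E → ℂ} {c : ℂ} {R : ℝ}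
    (hcont : ContinuousOn G (sphere c R ×ˢ univ))
    (hdiff : ∀ ζ ∈ sphere c R, Differentiable ℂ fun y => G (ζ, y)) {p : ℂ × E}
    (hp : p.1 ∈ ball c R) :
    DifferentiableAt ℂ (fun q : ℂ × E => ∮ ζ in C(c, R), (ζ - q.1)⁻¹ * G (ζ, q.2)) p := by
  obtain ⟨w₀, y₀⟩ := p
  set ρ := (R - dist w₀ c) / 2 with hρ_def
  have hρ : 0 < ρ := by rw [mem_ball] at hp; linarith
  have hR : 0 < R := by linarith [dist_nonneg (x := w₀) (y := c)]
  have hζ : ∀ θ, circleMap c R θ ∈ sphere c R := circleMap_mem_sphere c hR.le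
  obtain ⟨M, hM⟩ := exists_norm_le_and_norm_fderiv_le_of_continuousOn hcont hdiff y₀ hρ
  have hsep : ∀ θ, ∀ w ∈ ball w₀ ρ, ρ ≤ ‖circleMap c R θ - w‖ := by
    intro θ w hw
    rw [← dist_eq_norm]
    linarith [dist_triangle (circleMap c R θ) w c, dist_triangle w w₀ c, mem_sphere.1 (hζ θ),
      mem_ball.1 hw]
  have hne : ∀ θ, ∀ w ∈ ball w₀ ρ, circleMap c R θ - w ≠ 0 := fun θ w hw =>
    norm_pos_iff.1 (hρ.trans_le (hsep θ w hw))
  have hGcirc : Continuous fun x : ℝ × E => G (circleMap c R x.1, x.2) :=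
    hcont.comp_continuous (by fun_prop) fun x => ⟨hζ x.1, mem_univ _⟩
  have hG_cont : ∀ y, Continuous fun θ => G (circleMap c R θ, y) := fun y =>
    hGcirc.comp (continuous_id.prodMk continuous_const)
  have hinv_cont : ∀ w ∈ ball w₀ ρ, Continuous fun θ => (circleMap c R θ - w)⁻¹ := fun w hw =>
    ((continuous_circleMap c R).sub continuous_const).inv₀ fun θ => hne θ w hw
  have hderiv_cont : Continuous (deriv (circleMap c R)) := by
    rw [funext (deriv_circleMap c R)]; fun_prop
  set Ψ : ℂ × E → ℝ → ℂ := fun q θ =>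
    deriv (circleMap c R) θ • ((circleMap c R θ - q.1)⁻¹ * G (circleMap c R θ, q.2))
  set Ψ' : ℂ × E → ℝ → ℂ × E →L[ℂ] ℂ := fun q θ =>
    deriv (circleMap c R) θ • ((circleMap c R θ - q.1)⁻¹ •
      (fderiv ℂ (fun y => G (circleMap c R θ, y)) q.2).comp (snd ℂ ℂ E) +
      G (circleMap c R θ, q.2) • ((circleMap c R θ - q.1) ^ 2)⁻¹ • fst ℂ ℂ E) with hΨ'
  set s := ball w₀ ρ ×ˢ ball y₀ ρ
  have hs : s ∈ 𝓝 (w₀, y₀) := prod_mem_nhds (ball_mem_nhds _ hρ) (ball_mem_nhds _ hρ)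
  have hΨ_cont : ∀ q ∈ s, Continuous (Ψ q) := fun q hq =>
    hderiv_cont.smul ((hinv_cont q.1 hq.1).mul (hG_cont q.2))
  have hΨ'_meas : AEStronglyMeasurable (Ψ' (w₀, y₀)) (volume.restrict (uIoc 0 (2 * π))) := by
    have hw₀ : w₀ ∈ ball w₀ ρ := mem_ball_self hρ
    have hcomp : Continuous fun L : E →L[ℂ] ℂ => L.comp (snd ℂ ℂ E) :=
      continuous_id.clm_comp continuous_const
    have hsq : Continuous fun θ => ((circleMap c R θ - w₀) ^ 2)⁻¹ :=
      (((continuous_circleMap c R).sub continuous_const).pow 2).inv₀ fun θ =>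
        pow_ne_zero 2 (hne θ w₀ hw₀)
    exact hderiv_cont.aestronglyMeasurable.smul
      (((hinv_cont w₀ hw₀).aestronglyMeasurable.smul (hcomp.comp_aestronglyMeasurable
        (aestronglyMeasurable_fderiv_of_continuous_uncurry hGcirc y₀ _))).add
      ((hG_cont y₀).smul (hsq.smul continuous_const)).aestronglyMeasurable)
  have hΨ'_bound : ∀ θ, ∀ q ∈ s, ‖Ψ' q θ‖ ≤ R * (ρ⁻¹ * (2 * M / ρ) + M * (ρ ^ 2)⁻¹) := by
    intro θ q hq
    rw [hΨ', norm_smul, deriv_circleMap, norm_mul, norm_circleMap_zero, norm_I, mul_one,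
      abs_of_pos hR]
    gcongr
    exact norm_inv_smul_comp_snd_add_smul_fst_le hρ (hsep θ q.1 hq.1)
      (hM _ (hζ θ) q.2 hq.2).2 (hM _ (hζ θ) q.2 hq.2).1
  have hΨ_deriv : ∀ θ, ∀ q ∈ s, HasFDerivAt (fun q => Ψ q θ) (Ψ' q θ) q :=
    fun θ q hq => (hasFDerivAt_sub_inv_mul (sub_ne_zero.1 (hne θ q.1 hq.1)).symm
      (hdiff _ (hζ θ) q.2).hasFDerivAt).const_smul (deriv (circleMap c R) θ)
  exact differentiableAt_intervalIntegral_of_continuous hs hΨ_cont hΨ'_meas hΨ'_bound hΨ_deriv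

theorem differentiableAt_of_differentiableOn_closedBall_slice {H : ℂ × E → ℂ} {c : ℂ} {R : ℝ}
    (hslice : ∀ y, DifferentiableOn ℂ (fun w => H (w, y)) (closedBall c R))
    (hcont : ContinuousOn H (sphere c R ×ˢ univ))
    (hdiff : ∀ ζ ∈ sphere c R, Differentiable ℂ fun y => H (ζ, y)) {p : ℂ × E}
    (hp : p.1 ∈ ball c R) : DifferentiableAt ℂ H p := by
  have hcauchy : ∀ q ∈ ball c R ×ˢ (univ : Set E),
      (2 * π * I)⁻¹ • ∮ ζ in C(c, R), (ζ - q.1)⁻¹ * H (ζ, q.2) = H q := fun q hq => by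
    have h := (hslice q.2).circleIntegral_sub_inv_smul hq.1
    simp only [smul_eq_mul] at h
    rw [h, smul_eq_mul, inv_mul_cancel_left₀ (by simp [Real.pi_ne_zero])]
  refine ((differentiableAt_circleIntegral_sub_inv_mul hcont hdiff hp).const_smul
    (2 * π * I : ℂ)⁻¹).congr_of_eventuallyEq ?_
  exact eventually_of_mem (prod_mem_nhds (isOpen_ball.mem_nhds hp) univ_mem)
    fun q hq => (hcauchy q hq).symm

theorem exists_differentiable_eq_sub_mul {F : ℂ × E → ℂ} (hF : Differentiable ℂ F) (c : ℂ)
    (hc : ∀ y, F (c, y) = 0) :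
    ∃ H : ℂ × E → ℂ, Differentiable ℂ H ∧ ∀ p, F p = (p.1 - c) * H p := by
  set H : ℂ × E → ℂ := fun p => dslope (fun w => F (w, p.2)) c p.1 with hH
  have hslice : ∀ y, Differentiable ℂ fun w => F (w, y) := fun y => hF.comp (by fun_prop)
  have hsphere : ∀ R, 0 < R → EqOn H (fun p => (p.1 - c)⁻¹ * F p) (sphere c R ×ˢ univ) :=
    fun R hR p hp => by
      simp only [hH, dslope_of_ne _ (ne_of_mem_sphere hp.1 hR.ne'), slope_def_field, hc,
        sub_zero, div_eq_inv_mul]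
  refine ⟨H, fun p => ?_, fun p => ?_⟩
  · have hR : 0 < dist p.1 c + 1 := by positivity
    refine differentiableAt_of_differentiableOn_closedBall_slice (c := c) (R := dist p.1 c + 1)
      (fun y => ((differentiableOn_dslope univ_mem).2 (hslice y).differentiableOn).mono
        (subset_univ _)) ?_ (fun ζ hζ => ?_) (by simp)
    · refine ContinuousOn.congr ?_ (hsphere _ hR)
      exact ((continuous_fst.sub continuous_const).continuousOn.inv₀ fun q hq =>
        sub_ne_zero.2 (ne_of_mem_sphere hq.1 hR.ne')).mul hF.continuous.continuousOn
    · rw [funext fun y => hsphere _ hR (show (ζ, y) ∈ sphere c _ ×ˢ univ from ⟨hζ, mem_univ y⟩)]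
      exact (hF.comp ((differentiable_const ζ).prodMk differentiable_id)).const_mul (ζ - c)⁻¹
  · have := sub_smul_dslope (fun w => F (w, p.2)) c p.1
    simp only [hc, sub_zero, smul_eq_mul] at this
    exact this.symm

theorem exists_differentiable_eq_mul_of_simple_zeros {φ : ℂ → ℂ} (hφ : Differentiable ℂ φ)
    (hsimple : ∀ c, φ c = 0 → deriv φ c ≠ 0) {F : ℂ × E → ℂ} (hF : Differentiable ℂ F)
    (hzero : ∀ p : ℂ × E, φ p.1 = 0 → F p = 0) :
    ∃ H : ℂ × E → ℂ, Differentiable ℂ H ∧ ∀ p, F p = φ p.1 * H p := by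
  classical
  choose! Q hQ_diff hQ using fun c (hc : φ c = 0) =>
    exists_differentiable_eq_sub_mul hF c fun y => hzero (c, y) hc
  set H : ℂ × E → ℂ := fun p =>
    if φ p.1 = 0 then Q p.1 p / deriv φ p.1 else F p / φ p.1 with hH
  refine ⟨H, fun p => ?_, fun p => ?_⟩
  · by_cases hp : φ p.1 = 0
    · set c := p.1
      have hS : Differentiable ℂ (dslope φ c) :=
        differentiableOn_univ.1 ((differentiableOn_dslope univ_mem).2 hφ.differentiableOn)
      have hSc : dslope φ c c ≠ 0 := by rw [dslope_same]; exact hsimple c hp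
      have hSp : DifferentiableAt ℂ (fun q : ℂ × E => dslope φ c q.1) p :=
        (hS c).comp p differentiableAt_fst
      have hloc : H =ᶠ[𝓝 p] fun q => Q c q * (dslope φ c q.1)⁻¹ := by
        filter_upwards [hSp.continuousAt.eventually_ne hSc] with q hq
        by_cases hqc : q.1 = c
        · simp [hH, hqc, hp, dslope_same, div_eq_mul_inv]
        · have hφq : φ q.1 = (q.1 - c) * dslope φ c q.1 := by
            simpa [hp] using (sub_smul_dslope φ c q.1).symm
          have hφq0 : φ q.1 ≠ 0 := hφq ▸ mul_ne_zero (sub_ne_zero.2 hqc) hq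
          simp only [hH, if_neg hφq0, hQ c hp q, hφq]
          field_simp [sub_ne_zero.2 hqc]
      exact ((hQ_diff c hp p).mul (hSp.inv hSc)).congr_of_eventuallyEq hloc
    · have hφp : DifferentiableAt ℂ (fun q : ℂ × E => φ q.1) p := (hφ _).comp p differentiableAt_fst
      have hloc : H =ᶠ[𝓝 p] fun q => F q * (φ q.1)⁻¹ := by
        filter_upwards [hφp.continuousAt.eventually_ne hp] with q hq
        simp [hH, hq, div_eq_mul_inv]
      exact ((hF p).mul (hφp.inv hp)).congr_of_eventuallyEq hloc
  · by_cases hp : φ p.1 = 0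
    · simp [hp, hzero p hp]
    · simp only [hH, if_neg hp]
      field_simp

theorem dense_setOf_ne_zero_of_deriv_ne_zero {φ : ℂ → ℂ}
    (hsimple : ∀ c, φ c = 0 → deriv φ c ≠ 0) : Dense {w | φ w ≠ 0} := by
  have hint : interior {w | φ w = 0} = ∅ := by
    refine eq_empty_of_forall_notMem fun c hc => ?_
    have hev : φ =ᶠ[𝓝 c] fun _ => 0 := mem_interior_iff_mem_nhds.1 hc
    refine hsimple c hev.eq_of_nhds ?_
    simpa using hev.deriv_eq
  exact interior_eq_empty_iff_dense_compl.1 hint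

end Slices

section Coordinates

variable {ι : Type*} [Fintype ι] [DecidableEq ι] {φ : ℂ → ℂ}

theorem differentiable_update (m : ι) :
    Differentiable ℂ fun p : ℂ × (ι → ℂ) => Function.update p.2 m p.1 := by
  refine differentiable_pi.2 fun j => ?_
  by_cases h : j = m
  · subst h; simp only [Function.update_self]; fun_prop
  · simp only [Function.update_of_ne h]; fun_prop

theorem exists_differentiable_eq_mul_apply (hφ : Differentiable ℂ φ)
    (hsimple : ∀ c, φ c = 0 → deriv φ c ≠ 0) {F : (ι → ℂ) → ℂ} (hF : Differentiable ℂ F) (m : ι)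
    (hzero : ∀ z, φ (z m) = 0 → F z = 0) :
    ∃ G : (ι → ℂ) → ℂ, Differentiable ℂ G ∧ ∀ z, F z = φ (z m) * G z := by
  obtain ⟨H, hH, hFH⟩ := exists_differentiable_eq_mul_of_simple_zeros hφ hsimple
    (hF.comp (differentiable_update m)) fun p hp => hzero _ (by simpa using hp)
  refine ⟨fun z => H (z m, z), hH.comp ((differentiable_apply m).prodMk differentiable_id),
    fun z => ?_⟩
  simpa using hFH (z m, z)

theorem exists_differentiable_eq_mul_prod (hφ : Differentiable ℂ φ)
    (hsimple : ∀ c, φ c = 0 → deriv φ c ≠ 0) (s : Finset ι) {F : (ι → ℂ) → ℂ}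
    (hF : Differentiable ℂ F) (hzero : ∀ z, (∃ m ∈ s, φ (z m) = 0) → F z = 0) :
    ∃ G : (ι → ℂ) → ℂ, Differentiable ℂ G ∧ ∀ z, F z = G z * ∏ m ∈ s, φ (z m) := by
  induction s using Finset.induction_on generalizing F with
  | empty => exact ⟨F, hF, fun z => by simp⟩
  | @insert m s hm ih =>
    obtain ⟨G₁, hG₁, hFG₁⟩ := exists_differentiable_eq_mul_apply hφ hsimple hF m
      fun z hz => hzero z ⟨m, Finset.mem_insert_self m s, hz⟩
    have hG₁zero : ∀ z, (∃ j ∈ s, φ (z j) = 0) → G₁ z = 0 := by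
      rintro z ⟨j, hj, hzj⟩
      have hjm : j ≠ m := by rintro rfl; exact hm hj
      have hslice : (fun w => G₁ (Function.update z m w)) = 0 := by
        refine Continuous.ext_on (dense_setOf_ne_zero_of_deriv_ne_zero hsimple)
          (hG₁.continuous.comp (continuous_const.update m continuous_id)) continuous_const
          fun w hw => ?_
        have h := hFG₁ (Function.update z m w)
        rw [hzero _ ⟨j, Finset.mem_insert_of_mem hj, by simpa [hjm] using hzj⟩,
          Function.update_self] at h
        exact (mul_eq_zero.1 h.symm).resolve_left hw
      simpa using congr_fun hslice (z m)
    obtain ⟨G, hG, hG₁G⟩ := ih hG₁ hG₁zero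
    exact ⟨G, hG, fun z => by rw [hFG₁, hG₁G, Finset.prod_insert hm]; ring⟩

end Coordinates

theorem Complex.sin_pi_mul_eq_zero_iff {w : ℂ} : sin (π * w) = 0 ↔ ∃ k : ℤ, w = k := by
  simp [Complex.sin_eq_zero_iff, mul_comm (π : ℂ), Real.pi_ne_zero]

theorem Complex.deriv_sin_pi_mul_ne_zero {c : ℂ} (hc : sin (π * c) = 0) :
    deriv (fun w => sin (π * w)) c ≠ 0 := by
  have hcos : cos (π * c) ≠ 0 := fun h => by
    simpa [hc, h] using sin_sq_add_cos_sq (π * c)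
  rw [(((hasDerivAt_id' c).const_mul (π : ℂ)).csin).deriv]
  simp [hcos, Real.pi_ne_zero]

/-- An entire function on ℂⁿ vanishing on H^n = ⋃ₘ {z : zₘ ∈ ℤ} is divisible by
∏ₖ sin(π zₖ). -/
theorem stmt2 {n : ℕ} (F : (Fin n → ℂ) → ℂ) (hF : Differentiable ℂ F)
    (hvanish : ∀ z : Fin n → ℂ, (∃ m, ∃ k : ℤ, z m = (k : ℂ)) → F z = 0) :
    ∃ G : (Fin n → ℂ) → ℂ, Differentiable ℂ G ∧
      ∀ z, F z = G z * ∏ k, Complex.sin ((Real.pi : ℂ) * z k) :=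
  exists_differentiable_eq_mul_prod (by fun_prop) (fun _ => deriv_sin_pi_mul_ne_zero)
    (Finset.univ : Finset (Fin n)) hF
    fun z ⟨m, _, hm⟩ => hvanish z ⟨m, sin_pi_mul_eq_zero_iff.1 hm⟩
end

section
/- Let F be an entire function of one complex variable whose restriction to ℝ is integrable and whose Fourier transform (as an L¹ function) vanishes outside [−2π, 2π]. If F(n) = 0 and F′(n) = 0 for every integer n, then F ≡ 0. -/
/-!
Put `g = 𝓕 (F ∘ ofReal)`. The band limit makes `g` continuous and supported in `[-1, 1]`, and
Fourier inversion gives `𝓕 g x = F (-x)`, so the hypotheses at the integers say that `g` and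
`ξ ↦ ξ g ξ` have vanishing Fourier transform at every integer. For a function supported in
`[-1, 1]` these values are the Fourier coefficients of its `1`-periodisation, which is
`ξ ↦ g ξ + g (ξ - 1)` on `[0, 1)`. Both periodisations therefore vanish, and subtracting them
gives `g = 0`. Hence `F` vanishes on `ℝ`, and by the identity theorem everywhere.
-/

open MeasureTheory Filter Topology Set Complex
open scoped Real FourierTransform

theorem Differentiable.eq_zero_of_forall_ofReal_eq_zero {F : ℂ → ℂ} (hF : Differentiable ℂ F)
    (h : ∀ x : ℝ, F x = 0) : F = 0 := by
  have hreal : Tendsto ((↑) : ℝ → ℂ) (𝓝[≠] 0) (𝓝[≠] 0) :=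
    continuous_ofReal.continuousWithinAt.tendsto_nhdsWithin fun x hx => by simpa using hx
  exact (analyticOnNhd_univ_iff_differentiable.mpr hF).eq_of_frequently_eq analyticOnNhd_const
    (hreal.frequently (.of_forall h))

theorem Continuous.apply_eq_zero_of_le_norm {E G : Type*} [NormedAddCommGroup E]
    [NormedSpace ℝ E] [TopologicalSpace G] [T1Space G] [Zero G] {g : E → G} (hg : Continuous g)
    {r : ℝ} (hr : r ≠ 0) (h : ∀ x, r < ‖x‖ → g x = 0) {x : E} (hx : r ≤ ‖x‖) : g x = 0 := by
  have hsub : (Metric.closedBall 0 r)ᶜ ⊆ g ⁻¹' {0} := fun y hy => h y (by simpa using hy)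
  have := closure_minimal hsub (isClosed_singleton.preimage hg)
  rw [closure_compl, interior_closedBall 0 hr] at this
  exact this (by simpa using hx)

theorem AddCircle.eq_zero_of_fourierCoeff_eq_zero {T : ℝ} [Fact (0 < T)]
    (f : C(AddCircle T, ℂ)) (h : ∀ n, fourierCoeff f n = 0) (x : AddCircle T) : f x = 0 := by
  have hzero : fourierCoeff f = 0 := funext h
  have hs : Summable (fourierCoeff f) := by rw [hzero]; exact summable_zero
  have hsum := has_pointwise_sum_fourier_series_of_summable hs x
  simp only [h, zero_smul] at hsum
  exact hsum.unique hasSum_zero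

theorem one_le_abs_of_notMem_Ioc {x : ℝ} (hx : x ∉ Ioc (-1) 1) : 1 ≤ |x| := by
  rw [le_abs']
  by_contra! h
  exact hx ⟨by linarith, h.2.le⟩

theorem hasCompactSupport_of_forall_one_le_abs {E : Type*} [Zero E] {g : ℝ → E}
    (hs : ∀ y, 1 ≤ |y| → g y = 0) : HasCompactSupport g :=
  .intro isCompact_Icc fun x hx =>
    hs x (one_le_abs_of_notMem_Ioc fun h => hx (Ioc_subset_Icc_self h))

theorem Real.fourier_eq_integral_exp_neg_I_mul (f : ℝ → ℂ) (y : ℝ) :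
    𝓕 f y = ∫ t : ℝ, Complex.exp (-I * ((2 * π * y * t : ℝ) : ℂ)) * f t := by
  rw [Real.fourier_real_eq_integral_exp_smul]
  congr 1 with t
  rw [smul_eq_mul]
  push_cast
  ring_nf

theorem Real.fourier_intCast_eq_integral_fourier_mul (h : ℝ → ℂ) (n : ℤ) :
    𝓕 h n = ∫ x : ℝ, fourier (-n) (x : UnitAddCircle) * h x := by
  rw [Real.fourier_real_eq_integral_exp_smul]
  congr 1 with x
  rw [fourier_coe_apply, smul_eq_mul]
  push_cast
  ring_nf

theorem fourierCoeff_liftIco_add_comp_sub_one {h : ℝ → ℂ} (hc : Continuous h)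
    (hs : ∀ y, 1 ≤ |y| → h y = 0) (n : ℤ) :
    fourierCoeff (AddCircle.liftIco 1 0 fun x => h x + h (x - 1)) n = 𝓕 h n := by
  set e : ℝ → ℂ := fun x => fourier (-n) (x : UnitAddCircle)
  have he : Continuous e := (map_continuous _).comp continuous_quotient_mk'
  have he_periodic : ∀ x, e (x + 1) = e x := fun x => by simp only [e, AddCircle.coe_add_period]
  have hint : ∀ a b, IntervalIntegrable (fun x => e x * h x) volume a b :=
    fun _ _ => (he.mul hc).intervalIntegrable _ _
  calc fourierCoeff (AddCircle.liftIco 1 0 fun x => h x + h (x - 1)) n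
      = ∫ x in (0 : ℝ)..1, e x * h x + e x * h (x - 1) := by
        rw [fourierCoeff_eq_intervalIntegral _ _ 0, zero_add, div_one, one_smul]
        refine intervalIntegral.integral_congr_Ioo_of_le zero_le_one fun x hx => ?_
        rw [AddCircle.liftIco_zero_coe_apply (Ioo_subset_Ico_self hx), smul_eq_mul, mul_add]
    _ = (∫ x in (0 : ℝ)..1, e x * h x) + ∫ x in (-1 : ℝ)..0, e x * h x := by
        rw [intervalIntegral.integral_add (g := fun x => e x * h (x - 1)) (hint _ _)
          ((he.mul (hc.comp (continuous_sub_right 1))).intervalIntegrable _ _)]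
        congr 1
        simpa [he_periodic] using
          intervalIntegral.integral_comp_sub_right (fun x => e (x + 1) * h x) (a := 0) (b := 1) 1
    _ = ∫ x, e x * h x := by
        rw [add_comm, intervalIntegral.integral_add_adjacent_intervals (hint _ _) (hint _ _),
          intervalIntegral.integral_of_le (by norm_num)]
        refine setIntegral_eq_integral_of_forall_compl_eq_zero fun x hx => ?_
        rw [hs x (one_le_abs_of_notMem_Ioc hx), mul_zero]
    _ = 𝓕 h n := (Real.fourier_intCast_eq_integral_fourier_mul h n).symm

theorem add_comp_sub_one_eq_zero_of_fourier_intCast_eq_zero {h : ℝ → ℂ} (hc : Continuous h)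
    (hs : ∀ y, 1 ≤ |y| → h y = 0) (hF : ∀ n : ℤ, 𝓕 h n = 0) {ξ : ℝ} (hξ : ξ ∈ Ico 0 1) :
    h ξ + h (ξ - 1) = 0 := by
  have hlift : Continuous (AddCircle.liftIco 1 0 fun x => h x + h (x - 1)) :=
    AddCircle.liftIco_zero_continuous (by norm_num [hs]) (by fun_prop)
  have := AddCircle.eq_zero_of_fourierCoeff_eq_zero ⟨_, hlift⟩
    (fun n => (fourierCoeff_liftIco_add_comp_sub_one hc hs n).trans (hF n)) ξ
  rwa [ContinuousMap.coe_mk, AddCircle.liftIco_zero_coe_apply hξ] at this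

theorem eq_zero_of_fourier_vanishes_to_second_order_at_intCast {g : ℝ → ℂ} (hc : Continuous g)
    (hs : ∀ y, 1 ≤ |y| → g y = 0) (hF : ∀ n : ℤ, 𝓕 g n = 0 ∧ deriv (𝓕 g) (n : ℝ) = 0) :
    g = 0 := by
  have hsupp := hasCompactSupport_of_forall_one_le_abs hs
  set e : ℝ → ℂ := fun x => (-2 * π * I * x) • g x
  have he : Continuous e := by fun_prop
  have hes : ∀ y, 1 ≤ |y| → e y = 0 := fun y hy => by simp only [e, hs y hy, smul_zero]
  have hderiv : deriv (𝓕 g) = 𝓕 e := Real.deriv_fourier (hc.integrable_of_hasCompactSupport hsupp)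
    ((continuous_id.smul hc).integrable_of_hasCompactSupport hsupp.smul_left)
  have hIco : ∀ ξ ∈ Ico (0 : ℝ) 1, g ξ = 0 ∧ g (ξ - 1) = 0 := by
    intro ξ hξ
    have hg := add_comp_sub_one_eq_zero_of_fourier_intCast_eq_zero hc hs (fun n => (hF n).1) hξ
    have hxg := add_comp_sub_one_eq_zero_of_fourier_intCast_eq_zero he hes
      (fun n => hderiv ▸ (hF n).2) hξ
    have h2pi : -2 * π * I ≠ 0 := by simp [Real.pi_ne_zero, I_ne_zero]
    have hξ0 : g ξ = 0 := by
      refine (mul_eq_zero.mp ?_).resolve_left h2pi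
      simp only [e, smul_eq_mul] at hxg
      push_cast at hxg
      linear_combination hxg + 2 * π * I * (ξ - 1) * hg
    exact ⟨hξ0, by linear_combination hg - hξ0⟩
  funext ξ
  rcases le_or_gt 1 |ξ| with h | h
  · exact hs ξ h
  rcases le_or_gt 0 ξ with h0 | h0
  · exact (hIco ξ ⟨h0, (abs_lt.mp h).2⟩).1
  · simpa using (hIco (ξ + 1) ⟨by linarith [(abs_lt.mp h).1], by linarith⟩).2

/-- An entire function in the Bernstein space B¹_{[-2π,2π]} vanishing to second order at every
integer is identically zero. -/
theorem stmt4 (F : ℂ → ℂ) (hF : Differentiable ℂ F)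
    (hint : Integrable fun x : ℝ => F x)
    (hband : ∀ y : ℝ, 2 * Real.pi < |y| →
      ∫ t : ℝ, Complex.exp (-Complex.I * ((y * t : ℝ) : ℂ)) * F t = 0)
    (hzero : ∀ m : ℤ, F (m : ℂ) = 0 ∧ deriv F (m : ℂ) = 0) :
    ∀ z : ℂ, F z = 0 := by
  set f : ℝ → ℂ := fun x => F x
  have hgc : Continuous (𝓕 f) :=
    VectorFourier.fourierIntegral_continuous Real.continuous_fourierChar continuous_inner hint
  -- Mathlib's `𝓕` has kernel `exp (-2π i x y)`, so the band `[-2π, 2π]` becomes `[-1, 1]`.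
  have hgs : ∀ y, 1 ≤ |y| → 𝓕 f y = 0 := by
    refine fun y => hgc.apply_eq_zero_of_le_norm one_ne_zero fun η hη => ?_
    rw [Real.fourier_eq_integral_exp_neg_I_mul]
    refine hband _ ?_
    rw [abs_mul, abs_of_pos Real.two_pi_pos]
    nlinarith [Real.pi_pos, Real.norm_eq_abs η]
  have hinv : 𝓕⁻ (𝓕 f) = f := (hF.continuous.comp continuous_ofReal).fourierInv_fourier_eq hint
    (hgc.integrable_of_hasCompactSupport (hasCompactSupport_of_forall_one_le_abs hgs))
  have hFF : 𝓕 (𝓕 f) = fun x => f (-x) := funext fun x => by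
    simpa only [Real.fourierInv_eq_fourier_neg, neg_neg] using congrFun hinv (-x)
  have hg0 : 𝓕 f = 0 := eq_zero_of_fourier_vanishes_to_second_order_at_intCast hgc hgs fun n => by
    rw [hFF, deriv_comp_neg, ((hF _).hasDerivAt.comp_ofReal).deriv]
    simpa [f] using hzero (-n)
  refine congrFun (hF.eq_zero_of_forall_ofReal_eq_zero fun x => ?_)
  change f x = 0
  rw [← congrFun hinv x, hg0, Real.fourierInv_eq]
  simp
end

section
/- Let σ > 0 and define ξ₁(x) = (cos(σx/2)/(x² − (π/σ)²))² for x ∈ ℝ (extended continuously at x = ±π/σ). Then ξ₁ ∈ L¹(ℝ), its Fourier transform vanishes outside [−σ, σ], and ∫_ℝ ξ₁(t) dt = σ³/(4π). -/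
/-!
With `w` the cosine pulse `t ↦ (σ / 2π) cos (π t / σ)` on `[-σ/2, σ/2]`, a direct computation
gives `ξ₁ (t) = (𝓕 w (t / 2π))²`, where `𝓕` is Mathlib's Fourier transform with kernel
`e^{-2πixt}`. By the convolution theorem and Fourier inversion, the Fourier transform of `ξ₁` at
`y` is therefore `2π (w ⋆ w) (-y)`. The autocorrelation `w ⋆ w` is supported in `[-σ, σ]`, and its
value at `0` is `∫ w² = σ³ / (8π²)`. Integrability comes from `𝓕 w` being a sum of two shifted
`sinc` functions.
-/

open MeasureTheory

/-- `ξ₁(x) = (cos(σx/2)/(x² − (π/σ)²))²`, extended continuously at `x = ±π/σ`. -/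
noncomputable def xi1 (σ : ℝ) (x : ℝ) : ℝ :=
  if x ^ 2 = (Real.pi / σ) ^ 2 then σ ^ 4 / (16 * Real.pi ^ 2)
  else (Real.cos (σ * x / 2) / (x ^ 2 - (Real.pi / σ) ^ 2)) ^ 2

open Set Real
open scoped FourierTransform Convolution

section FourierOfProduct

variable {V : Type*} [NormedAddCommGroup V] [InnerProductSpace ℝ V] [FiniteDimensional ℝ V]
  [MeasurableSpace V] [BorelSpace V]

theorem fourier_fourier_mul_fourier {f g : V → ℂ} (hf : Integrable f) (hg : Integrable g)
    (hfg : Continuous (f ⋆[ContinuousLinearMap.mul ℂ ℂ] g)) (hi : Integrable (𝓕 f * 𝓕 g))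
    (y : V) : 𝓕 (𝓕 f * 𝓕 g) y = (f ⋆[ContinuousLinearMap.mul ℂ ℂ] g) (-y) := by
  have hconv : 𝓕 f * 𝓕 g = 𝓕 (f ⋆[ContinuousLinearMap.mul ℂ ℂ] g) :=
    funext fun ξ => (fourier_mul_convolution_eq hf hg ξ).symm
  rw [hconv] at hi ⊢
  rw [← neg_neg y, ← fourierInv_eq_fourier_neg, neg_neg,
    hfg.fourierInv_fourier_eq (hf.integrable_convolution _ hg) hi]

end FourierOfProduct

theorem integral_cexp_mul_comp_div_two_pi (G : ℝ → ℂ) (y : ℝ) :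
    ∫ t : ℝ, Complex.exp (-Complex.I * ((y * t : ℝ) : ℂ)) * G (t / (2 * π)) =
      (2 * π : ℂ) * 𝓕 G y := by
  have h2π : 0 < 2 * π := by positivity
  have hscale := Measure.integral_comp_mul_left
    (fun t : ℝ => Complex.exp (-Complex.I * ((y * t : ℝ) : ℂ)) * G (t / (2 * π))) (2 * π)
  rw [abs_of_pos (inv_pos.mpr h2π), eq_inv_smul_iff₀ h2π.ne'] at hscale
  rw [← hscale, Real.fourier_real_eq_integral_exp_smul, Complex.real_smul]
  push_cast
  congr 1
  refine integral_congr_ae (ae_of_all _ fun x => ?_)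
  beta_reduce
  rw [mul_div_cancel_left₀ x h2π.ne', smul_eq_mul]
  ring_nf

theorem integral_cexp_mul_I_symm (m c : ℝ) :
    ∫ v in -c..c, Complex.exp (m * v * Complex.I) = ((2 * c * sinc (m * c) : ℝ) : ℂ) := by
  rcases eq_or_ne m 0 with rfl | hm
  · simp; ring
  have hsinc : c * sinc (m * c) = sin (m * c) / m := by
    rcases eq_or_ne c 0 with rfl | hc
    · simp
    · rw [sinc_of_ne_zero (mul_ne_zero hm hc)]
      field_simp
  have hmI : (m : ℂ) * Complex.I ≠ 0 := by simp [hm]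
  simp_rw [mul_right_comm _ _ Complex.I]
  rw [integral_exp_mul_complex hmI, mul_assoc 2 c, hsinc]
  push_cast
  rw [Complex.sin]
  field_simp
  ring_nf
  rw [Complex.I_sq]
  ring_nf

theorem sinc_mul_eq_sin (x : ℝ) : sinc x * x = sin x := by
  rcases eq_or_ne x 0 with rfl | hx
  · simp
  · rw [sinc_of_ne_zero hx, div_mul_cancel₀ _ hx]

theorem integrable_sinc_sq : Integrable fun x => sinc x ^ 2 := by
  refine (integrable_inv_one_add_sq.const_mul 2).mono' (by fun_prop)
    (ae_of_all _ fun x => ?_)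
  have h₁ : sinc x ^ 2 ≤ 1 := by
    simpa [sq_abs] using pow_le_one₀ (abs_nonneg _) (abs_sinc_le_one x) (n := 2)
  have h₂ : sinc x ^ 2 * x ^ 2 ≤ 1 := by
    rw [← mul_pow, sinc_mul_eq_sin]; exact sin_sq_le_one x
  rw [Real.norm_of_nonneg (sq_nonneg _), ← div_eq_mul_inv, le_div_iff₀ (by positivity)]
  linarith

noncomputable def cosPulseSpectrum (u : ℝ) : ℝ := sinc (π / 2 - u) + sinc (π / 2 + u)

theorem cosPulseSpectrum_of_sq_eq {u : ℝ} (hu : 4 * u ^ 2 = π ^ 2) : cosPulseSpectrum u = 1 := by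
  have : u = π / 2 ∨ u = -(π / 2) := by
    apply sq_eq_sq_iff_eq_or_eq_neg.mp; linarith
  rcases this with rfl | rfl <;> simp [cosPulseSpectrum, add_halves, sinc_of_ne_zero pi_ne_zero]

theorem cosPulseSpectrum_of_sq_ne {u : ℝ} (hu : 4 * u ^ 2 ≠ π ^ 2) :
    cosPulseSpectrum u = 4 * π * cos u / (π ^ 2 - 4 * u ^ 2) := by
  have h₁ : π / 2 - u ≠ 0 := fun h => hu (by rw [← sub_eq_zero.mp h]; ring)
  have h₂ : u + π / 2 ≠ 0 := fun h => hu (by rw [eq_neg_of_add_eq_zero_left h]; ring)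
  have h₃ : π ^ 2 - 4 * u ^ 2 ≠ 0 := sub_ne_zero.mpr (Ne.symm hu)
  rw [cosPulseSpectrum, add_comm (π / 2) u, sinc_of_ne_zero h₁, sinc_of_ne_zero h₂,
    sin_pi_div_two_sub, sin_add_pi_div_two, div_add_div _ _ h₁ h₂,
    div_eq_div_iff (mul_ne_zero h₁ h₂) h₃]
  ring

theorem integrable_cosPulseSpectrum_sq : Integrable fun u => cosPulseSpectrum u ^ 2 := by
  refine ((integrable_sinc_sq.comp_sub_left (π / 2)).add
    (integrable_sinc_sq.comp_add_left (π / 2))).const_mul 2 |>.mono' ?_ (ae_of_all _ fun u => ?_)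
  · exact (continuous_sinc.comp (by fun_prop)).add (continuous_sinc.comp (by fun_prop)) |>.pow 2
      |>.aestronglyMeasurable
  · rw [Real.norm_of_nonneg (sq_nonneg _), cosPulseSpectrum, Pi.add_apply]
    nlinarith [sq_nonneg (sinc (π / 2 - u) - sinc (π / 2 + u))]

theorem xi1_eq_sq {σ : ℝ} (hσ : σ ≠ 0) (t : ℝ) :
    xi1 σ t = (σ ^ 2 / (4 * π) * cosPulseSpectrum (σ / 2 * t)) ^ 2 := by
  have hiff : t ^ 2 = (π / σ) ^ 2 ↔ 4 * (σ / 2 * t) ^ 2 = π ^ 2 := by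
    rw [div_pow]; constructor <;> intro h <;> field_simp at h ⊢ <;> linarith
  rw [xi1]
  split_ifs with h
  · rw [cosPulseSpectrum_of_sq_eq (hiff.mp h)]
    ring
  · have h' : t ^ 2 - (π / σ) ^ 2 ≠ 0 := sub_ne_zero.mpr h
    have hden : π ^ 2 - 4 * (σ / 2 * t) ^ 2 = -σ ^ 2 * (t ^ 2 - (π / σ) ^ 2) := by
      field_simp; ring
    rw [cosPulseSpectrum_of_sq_ne (mt hiff.mpr h), mul_div_right_comm σ t, hden]
    field_simp

theorem integrable_xi1 {σ : ℝ} (hσ : 0 < σ) : Integrable (xi1 σ) := by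
  simp_rw [funext (xi1_eq_sq hσ.ne'), mul_pow]
  exact (integrable_cosPulseSpectrum_sq.comp_mul_left' (by positivity)).const_mul _

noncomputable def cosPulse (σ : ℝ) : ℝ → ℂ :=
  (Icc (-(σ / 2)) (σ / 2)).indicator fun t => ((σ / (2 * π) * cos (π / σ * t) : ℝ) : ℂ)

section CosPulse

variable {σ : ℝ}

theorem continuous_cosPulse (hσ : 0 < σ) : Continuous (cosPulse σ) := by
  refine continuous_indicator (fun t ht => ?_) (by fun_prop)
  rw [frontier_Icc (by linarith)] at ht
  rcases ht with rfl | rfl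
  · rw [show π / σ * -(σ / 2) = -(π / 2) by field_simp, cos_neg, cos_pi_div_two]; simp
  · rw [show π / σ * (σ / 2) = π / 2 by field_simp, cos_pi_div_two]; simp

theorem support_cosPulse_subset : Function.support (cosPulse σ) ⊆ Icc (-(σ / 2)) (σ / 2) :=
  support_indicator_subset

theorem hasCompactSupport_cosPulse : HasCompactSupport (cosPulse σ) :=
  HasCompactSupport.intro isCompact_Icc fun _ ht => indicator_of_notMem ht _

theorem integrable_cosPulse (hσ : 0 < σ) : Integrable (cosPulse σ) :=
  (continuous_cosPulse hσ).integrable_of_hasCompactSupport hasCompactSupport_cosPulse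

theorem cosPulse_neg (t : ℝ) : cosPulse σ (-t) = cosPulse σ t := by
  have hmem : -t ∈ Icc (-(σ / 2)) (σ / 2) ↔ t ∈ Icc (-(σ / 2)) (σ / 2) := by
    simp only [mem_Icc]; constructor <;> intro h <;> constructor <;> linarith [h.1, h.2]
  simp only [cosPulse, indicator_apply, hmem, mul_neg, cos_neg]

theorem fourier_cosPulse (hσ : 0 < σ) (x : ℝ) :
    𝓕 (cosPulse σ) x = ((σ ^ 2 / (4 * π) * cosPulseSpectrum (π * σ * x) : ℝ) : ℂ) := by
  have hexpand : ∀ v : ℝ, Complex.exp ((-2 * π * v * x : ℝ) * Complex.I) •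
        ((σ / (2 * π) * cos (π / σ * v) : ℝ) : ℂ) =
      ((σ / (4 * π) : ℝ) : ℂ) * (Complex.exp ((π / σ - 2 * π * x : ℝ) * v * Complex.I) +
        Complex.exp ((-(π / σ + 2 * π * x) : ℝ) * v * Complex.I)) := by
    intro v
    have h₁ : ((π / σ - 2 * π * x : ℝ) : ℂ) * v * Complex.I =
        ((-2 * π * v * x : ℝ) : ℂ) * Complex.I + ((π / σ * v : ℝ) : ℂ) * Complex.I := by
      push_cast; ring
    have h₂ : ((-(π / σ + 2 * π * x) : ℝ) : ℂ) * v * Complex.I =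
        ((-2 * π * v * x : ℝ) : ℂ) * Complex.I + -((π / σ * v : ℝ) : ℂ) * Complex.I := by
      push_cast; ring
    rw [h₁, h₂, Complex.exp_add, Complex.exp_add, smul_eq_mul, Complex.ofReal_mul (σ / (2 * π)),
      Complex.ofReal_cos, Complex.cos]
    push_cast
    ring
  have hintegrand : (fun v : ℝ => Complex.exp ((-2 * π * v * x : ℝ) * Complex.I) • cosPulse σ v) =
      (Icc (-(σ / 2)) (σ / 2)).indicator fun v => ((σ / (4 * π) : ℝ) : ℂ) *
        (Complex.exp ((π / σ - 2 * π * x : ℝ) * v * Complex.I) +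
          Complex.exp ((-(π / σ + 2 * π * x) : ℝ) * v * Complex.I)) := by
    ext v
    simp only [cosPulse, ← hexpand, indicator_smul_apply]
  rw [Real.fourier_real_eq_integral_exp_smul, hintegrand, integral_indicator measurableSet_Icc,
    integral_Icc_eq_integral_Ioc, ← intervalIntegral.integral_of_le (by linarith),
    intervalIntegral.integral_const_mul,
    intervalIntegral.integral_add (by apply Continuous.intervalIntegrable; fun_prop)
      (by apply Continuous.intervalIntegrable; fun_prop),
    integral_cexp_mul_I_symm, integral_cexp_mul_I_symm, cosPulseSpectrum]
  have hu₁ : (π / σ - 2 * π * x) * (σ / 2) = π / 2 - π * σ * x := by field_simp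
  have hu₂ : -(π / σ + 2 * π * x) * (σ / 2) = -(π / 2 + π * σ * x) := by field_simp
  rw [hu₁, hu₂, sinc_neg]
  push_cast
  field_simp

theorem integrable_fourier_cosPulse_sq (hσ : 0 < σ) :
    Integrable (𝓕 (cosPulse σ) * 𝓕 (cosPulse σ)) := by
  have hsq : 𝓕 (cosPulse σ) * 𝓕 (cosPulse σ) =
      fun x => (((σ ^ 2 / (4 * π)) ^ 2 * cosPulseSpectrum (π * σ * x) ^ 2 : ℝ) : ℂ) := by
    ext x
    rw [Pi.mul_apply, fourier_cosPulse hσ]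
    push_cast
    ring
  rw [hsq]
  exact ((integrable_cosPulseSpectrum_sq.comp_mul_left' (by positivity)).const_mul _).ofReal

theorem xi1_eq_fourier_cosPulse_sq (hσ : 0 < σ) (t : ℝ) :
    (xi1 σ t : ℂ) = (𝓕 (cosPulse σ) * 𝓕 (cosPulse σ)) (t / (2 * π)) := by
  rw [Pi.mul_apply, fourier_cosPulse hσ, xi1_eq_sq hσ.ne', ← Complex.ofReal_mul, sq]
  congr 4 <;> field_simp

theorem support_convolution_cosPulse_subset :
    Function.support (cosPulse σ ⋆[ContinuousLinearMap.mul ℂ ℂ] cosPulse σ) ⊆ Icc (-σ) σ := by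
  refine (support_convolution_subset _).trans ?_
  refine (add_subset_add support_cosPulse_subset support_cosPulse_subset).trans ?_
  refine (Icc_add_Icc_subset _ _ _ _).trans (le_of_eq ?_)
  congr 1 <;> ring

theorem integral_cos_pi_div_mul_sq (hσ : 0 < σ) :
    ∫ t in -(σ / 2)..σ / 2, cos (π / σ * t) ^ 2 = σ / 2 := by
  rw [intervalIntegral.integral_comp_mul_left (fun u => cos u ^ 2) (by positivity),
    show π / σ * -(σ / 2) = -(π / 2) by field_simp, show π / σ * (σ / 2) = π / 2 by field_simp,
    integral_cos_sq, cos_neg, cos_pi_div_two, smul_eq_mul]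
  field_simp
  ring

theorem convolution_cosPulse_self_zero (hσ : 0 < σ) :
    (cosPulse σ ⋆[ContinuousLinearMap.mul ℂ ℂ] cosPulse σ) 0 = ((σ ^ 3 / (8 * π ^ 2) : ℝ) : ℂ) := by
  have hsq : (fun t => cosPulse σ t * cosPulse σ t) = fun t =>
      (((Icc (-(σ / 2)) (σ / 2)).indicator
        fun t : ℝ => (σ / (2 * π)) ^ 2 * cos (π / σ * t) ^ 2 : ℝ → ℝ) t : ℂ) := by
    ext t
    simp only [cosPulse, indicator_apply]
    split_ifs <;> push_cast <;> ring
  rw [convolution_def]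
  simp only [zero_sub, cosPulse_neg, ContinuousLinearMap.mul_apply']
  rw [hsq, integral_complex_ofReal, integral_indicator measurableSet_Icc,
    integral_Icc_eq_integral_Ioc, ← intervalIntegral.integral_of_le (by linarith),
    intervalIntegral.integral_const_mul, integral_cos_pi_div_mul_sq hσ]
  congr 1
  field_simp
  ring

theorem integral_cexp_mul_xi1 (hσ : 0 < σ) (y : ℝ) :
    ∫ t : ℝ, Complex.exp (-Complex.I * ((y * t : ℝ) : ℂ)) * (xi1 σ t : ℂ) =
      2 * π * (cosPulse σ ⋆[ContinuousLinearMap.mul ℂ ℂ] cosPulse σ) (-y) := by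
  simp_rw [xi1_eq_fourier_cosPulse_sq hσ]
  rw [integral_cexp_mul_comp_div_two_pi, fourier_fourier_mul_fourier (integrable_cosPulse hσ)
    (integrable_cosPulse hσ) (hasCompactSupport_cosPulse.continuous_convolution_left _
      (continuous_cosPulse hσ) (integrable_cosPulse hσ).locallyIntegrable)
    (integrable_fourier_cosPulse_sq hσ)]

end CosPulse

/-- `ξ₁ ∈ L¹(ℝ)`, its Fourier transform vanishes outside `[−σ, σ]`, and
`∫ ξ₁ = σ³/(4π)`. -/
theorem stmt12 (σ : ℝ) (hσ : 0 < σ) :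
    Integrable (xi1 σ) ∧
    (∀ y : ℝ, σ < |y| →
      ∫ t : ℝ, Complex.exp (-Complex.I * ((y * t : ℝ) : ℂ)) * (xi1 σ t : ℂ) = 0) ∧
    ∫ t : ℝ, xi1 σ t = σ ^ 3 / (4 * Real.pi) := by
  refine ⟨integrable_xi1 hσ, fun y hy => ?_, ?_⟩
  · have hy' : -y ∉ Function.support (cosPulse σ ⋆[ContinuousLinearMap.mul ℂ ℂ] cosPulse σ) :=
      fun h => by
        have := support_convolution_cosPulse_subset h
        rw [mem_Icc, ← abs_le, abs_neg] at this
        linarith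
    rw [integral_cexp_mul_xi1 hσ, Function.notMem_support.mp hy', mul_zero]
  · have h0 := integral_cexp_mul_xi1 hσ 0
    simp only [zero_mul, Complex.ofReal_zero, mul_zero, Complex.exp_zero, one_mul, neg_zero,
      integral_complex_ofReal, convolution_cosPulse_self_zero hσ] at h0
    have hπ : (π : ℂ) ≠ 0 := Complex.ofReal_ne_zero.mpr pi_ne_zero
    rw [show 2 * π * ((σ ^ 3 / (8 * π ^ 2) : ℝ) : ℂ) = ((σ ^ 3 / (4 * π) : ℝ) : ℂ) by
      push_cast; field_simp; ring] at h0
    exact_mod_cast h0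
end

section
/- Let σ > 0, A = π√n/σ, and ξ(x) = ∏_{k=1}^n (cos(σx_k/2)/(x_k² − (π/σ)²))² · (A² − ∑_k x_k²). Then ξ(x) ≤ 0 for every x ∈ ℝⁿ with ∑_k x_k² ≥ A², ξ is bounded on ℝⁿ, and ξ is not identically zero. -/
open Finset

/-- `ξ(x) = ∏ₖ (cos(σxₖ/2)/(xₖ² − (π/σ)²))² · (A² − ∑ₖ xₖ²)` with `A = π√n/σ`. -/
noncomputable def xiN (n : ℕ) (σ : ℝ) (x : Fin n → ℝ) : ℝ :=
  (∏ k, xi1 σ (x k)) * ((Real.pi * Real.sqrt n / σ) ^ 2 - ∑ k, x k ^ 2)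

lemma xi1_nonneg (σ x : ℝ) : 0 ≤ xi1 σ x := by
  unfold xi1; split
  · positivity
  · positivity

lemma abs_cos_le_left (hσ : 0 < σ) (x : ℝ) :
    |Real.cos (σ * x / 2)| ≤ σ / 2 * |x - Real.pi / σ| := by
  have h : Real.cos (σ * x / 2) = - Real.sin (σ / 2 * (x - Real.pi / σ)) := by
    have : σ / 2 * (x - Real.pi / σ) = σ * x / 2 - Real.pi / 2 := by
      field_simp
    rw [this, Real.sin_sub, Real.sin_pi_div_two, Real.cos_pi_div_two]; ring
  rw [h, abs_neg]
  calc |Real.sin (σ / 2 * (x - Real.pi / σ))| ≤ |σ / 2 * (x - Real.pi / σ)| :=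
        Real.abs_sin_le_abs
    _ = σ / 2 * |x - Real.pi / σ| := by
        rw [abs_mul, abs_of_pos (by linarith)]

lemma abs_cos_le_right (hσ : 0 < σ) (x : ℝ) :
    |Real.cos (σ * x / 2)| ≤ σ / 2 * |x + Real.pi / σ| := by
  have h : Real.cos (σ * x / 2) = Real.sin (σ / 2 * (x + Real.pi / σ)) := by
    have : σ / 2 * (x + Real.pi / σ) = σ * x / 2 + Real.pi / 2 := by
      field_simp
    rw [this, Real.sin_add, Real.sin_pi_div_two, Real.cos_pi_div_two]; ring
  rw [h]
  calc |Real.sin (σ / 2 * (x + Real.pi / σ))| ≤ |σ / 2 * (x + Real.pi / σ)| :=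
        Real.abs_sin_le_abs
    _ = σ / 2 * |x + Real.pi / σ| := by
        rw [abs_mul, abs_of_pos (by linarith)]

/-- Key pointwise bound on the ratio off the singular set. -/
lemma ratio_le {σ : ℝ} (hσ : 0 < σ) {x : ℝ} (hx : x ^ 2 ≠ (Real.pi / σ) ^ 2) :
    |Real.cos (σ * x / 2) / (x ^ 2 - (Real.pi / σ) ^ 2)| ≤ σ ^ 2 / (2 * Real.pi) := by
  set c := Real.pi / σ with hc
  have hcpos : 0 < c := div_pos Real.pi_pos hσ
  have h1 : x - c ≠ 0 := fun h => hx (by rw [show x = c by linarith])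
  have h2 : x + c ≠ 0 := fun h => hx (by rw [show x = -c by linarith]; ring)
  have hd : x ^ 2 - c ^ 2 = (x - c) * (x + c) := by ring
  rcases le_or_gt c |x + c| with h | h
  · -- use bound with |x - c|
    rw [abs_div, hd, abs_mul]
    rw [div_le_iff₀ (by positivity)]
    calc |Real.cos (σ * x / 2)| ≤ σ / 2 * |x - c| := abs_cos_le_left hσ x
      _ ≤ σ ^ 2 / (2 * Real.pi) * (|x - c| * |x + c|) := by
          rw [show σ ^ 2 / (2 * Real.pi) * (|x - c| * |x + c|)
              = |x - c| * (σ ^ 2 / (2 * Real.pi) * |x + c|) by ring]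
          rw [show σ / 2 * |x - c| = |x - c| * (σ/2) by ring]
          apply mul_le_mul_of_nonneg_left _ (abs_nonneg _)
          calc σ / 2 = σ ^ 2 / (2 * Real.pi) * c := by
                rw [hc]; field_simp
            _ ≤ σ ^ 2 / (2 * Real.pi) * |x + c| := by
                apply mul_le_mul_of_nonneg_left h (by positivity)
  · -- |x + c| < c forces |x - c| ≥ c
    have h3 : c ≤ |x - c| := by
      rcases abs_lt.mp h with ⟨ha, hb⟩
      rw [abs_sub_comm, abs_of_pos (by linarith)]; linarith
    rw [abs_div, hd, abs_mul]
    rw [div_le_iff₀ (by positivity)]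
    calc |Real.cos (σ * x / 2)| ≤ σ / 2 * |x + c| := abs_cos_le_right hσ x
      _ ≤ σ ^ 2 / (2 * Real.pi) * (|x - c| * |x + c|) := by
          rw [show σ ^ 2 / (2 * Real.pi) * (|x - c| * |x + c|)
              = |x + c| * (σ ^ 2 / (2 * Real.pi) * |x - c|) by ring]
          rw [show σ / 2 * |x + c| = |x + c| * (σ/2) by ring]
          apply mul_le_mul_of_nonneg_left _ (abs_nonneg _)
          calc σ / 2 = σ ^ 2 / (2 * Real.pi) * c := by
                rw [hc]; field_simp
            _ ≤ σ ^ 2 / (2 * Real.pi) * |x - c| := by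
                apply mul_le_mul_of_nonneg_left h3 (by positivity)

lemma xi1_le {σ : ℝ} (hσ : 0 < σ) (x : ℝ) :
    xi1 σ x ≤ σ ^ 4 / (4 * Real.pi ^ 2) := by
  unfold xi1
  split_ifs with h
  · have hπ : (1:ℝ) ≤ Real.pi := by linarith [Real.pi_gt_three]
    rw [div_le_div_iff₀ (by positivity) (by positivity)]
    nlinarith [pow_pos hσ 4]
  · have := ratio_le hσ h
    have h2 := sq_le_sq' (by linarith [abs_nonneg (Real.cos (σ * x / 2) / (x ^ 2 - (Real.pi / σ) ^ 2)), neg_abs_le (Real.cos (σ * x / 2) / (x ^ 2 - (Real.pi / σ) ^ 2))] : -(σ ^ 2 / (2 * Real.pi)) ≤ Real.cos (σ * x / 2) / (x ^ 2 - (Real.pi / σ) ^ 2)) (le_trans (le_abs_self _) this)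
    calc (Real.cos (σ * x / 2) / (x ^ 2 - (Real.pi / σ) ^ 2)) ^ 2
        ≤ (σ ^ 2 / (2 * Real.pi)) ^ 2 := h2
      _ = σ ^ 4 / (4 * Real.pi ^ 2) := by ring

lemma xi1_mul_sq_le {σ : ℝ} (hσ : 0 < σ) (x : ℝ) :
    xi1 σ x * x ^ 2 ≤ σ ^ 2 / 2 + 2 * σ ^ 2 / Real.pi ^ 2 := by
  set c := Real.pi / σ with hc
  have hcpos : 0 < c := div_pos Real.pi_pos hσ
  have hc2 : c ^ 2 = Real.pi ^ 2 / σ ^ 2 := by rw [hc]; ring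
  rcases le_or_gt (x ^ 2) (2 * c ^ 2) with h | h
  · have h1 : xi1 σ x ≤ σ ^ 4 / (4 * Real.pi ^ 2) := xi1_le hσ x
    have h2 : xi1 σ x * x ^ 2 ≤ σ ^ 4 / (4 * Real.pi ^ 2) * (2 * c ^ 2) := by
      apply mul_le_mul h1 h (sq_nonneg x) (by positivity)
    have h3 : σ ^ 4 / (4 * Real.pi ^ 2) * (2 * c ^ 2) = σ ^ 2 / 2 := by
      rw [hc2]; field_simp; ring
    have : (0:ℝ) ≤ 2 * σ ^ 2 / Real.pi ^ 2 := by positivity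
    linarith [h2, h3 ▸ h2]
  · -- x² > 2c², so x² - c² ≥ x²/2 > 0
    have hne : x ^ 2 ≠ c ^ 2 := by nlinarith
    have hd : x ^ 2 - c ^ 2 ≥ x ^ 2 / 2 := by nlinarith
    have hxpos : 0 < x ^ 2 := by nlinarith
    unfold xi1
    rw [if_neg (hc ▸ hne)]
    have hcos : Real.cos (σ * x / 2) ^ 2 ≤ 1 := by
      nlinarith [Real.neg_one_le_cos (σ * x / 2), Real.cos_le_one (σ * x / 2)]
    have hdpos : 0 < x ^ 2 - c ^ 2 := by nlinarith
    rw [div_pow]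
    have key : Real.cos (σ * x / 2) ^ 2 / (x ^ 2 - c ^ 2) ^ 2 * x ^ 2
        ≤ x ^ 2 / (x ^ 2 / 2) ^ 2 := by
      rw [div_mul_eq_mul_div, div_le_div_iff₀ (by positivity) (by positivity)]
      have e1 : (x^2/2)^2 ≤ (x^2 - c^2)^2 := by nlinarith
      nlinarith [mul_nonneg (sq_nonneg (Real.cos (σ * x / 2))) (sq_nonneg x),
        mul_le_mul_of_nonneg_left e1 hxpos.le,
        mul_le_mul_of_nonneg_right hcos (mul_nonneg hxpos.le (sq_nonneg (x^2-c^2)))]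
    have e2 : x ^ 2 / (x ^ 2 / 2) ^ 2 = 4 / x ^ 2 := by field_simp; ring
    have e3 : 4 / x ^ 2 ≤ 2 / c ^ 2 := by
      rw [div_le_div_iff₀ hxpos (by positivity)]; nlinarith
    have e4 : 2 / c ^ 2 = 2 * σ ^ 2 / Real.pi ^ 2 := by rw [hc2]; field_simp
    have : (0:ℝ) ≤ σ ^ 2 / 2 := by positivity
    calc Real.cos (σ * x / 2) ^ 2 / (x ^ 2 - c ^ 2) ^ 2 * x ^ 2
        ≤ 4 / x ^ 2 := by rw [← e2]; exact key
      _ ≤ 2 * σ ^ 2 / Real.pi ^ 2 := e4 ▸ e3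
      _ ≤ σ ^ 2 / 2 + 2 * σ ^ 2 / Real.pi ^ 2 := by linarith

/-- `ξ ≤ 0` outside the ball of radius `A = π√n/σ`, `ξ` is bounded, and `ξ ≢ 0`. -/
theorem stmt15 {n : ℕ} (hn : 0 < n) (σ : ℝ) (hσ : 0 < σ) :
    (∀ x : Fin n → ℝ, (Real.pi * Real.sqrt n / σ) ^ 2 ≤ ∑ k, x k ^ 2 → xiN n σ x ≤ 0) ∧
    (∃ C : ℝ, ∀ x : Fin n → ℝ, |xiN n σ x| ≤ C) ∧
    xiN n σ ≠ 0 := by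
  have hπ := Real.pi_pos
  set A2 : ℝ := (Real.pi * Real.sqrt n / σ) ^ 2 with hA2
  have hA2nonneg : 0 ≤ A2 := sq_nonneg _
  refine ⟨?_, ?_, ?_⟩
  · intro x hx
    unfold xiN
    have hP : 0 ≤ ∏ k, xi1 σ (x k) := Finset.prod_nonneg fun k _ => xi1_nonneg σ (x k)
    have : A2 - ∑ k, x k ^ 2 ≤ 0 := by simpa using sub_nonpos.mpr hx
    exact mul_nonpos_of_nonneg_of_nonpos hP this
  · -- boundedness
    set B : ℝ := σ ^ 4 / (4 * Real.pi ^ 2) + σ ^ 2 / 2 + 2 * σ ^ 2 / Real.pi ^ 2 with hB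
    have hBpos : 0 < B := by positivity
    have hxiB : ∀ t : ℝ, xi1 σ t ≤ B := by
      intro t
      have h1 := xi1_le hσ t
      have : (0:ℝ) ≤ σ ^ 2 / 2 + 2 * σ ^ 2 / Real.pi ^ 2 := by positivity
      rw [hB]; linarith
    have hxi2B : ∀ t : ℝ, xi1 σ t * t ^ 2 ≤ B := by
      intro t
      have h1 := xi1_mul_sq_le hσ t
      have : (0:ℝ) ≤ σ ^ 4 / (4 * Real.pi ^ 2) := by positivity
      rw [hB]; linarith
    refine ⟨B ^ n * A2 + n * B ^ n, fun x => ?_⟩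
    set P : ℝ := ∏ k, xi1 σ (x k) with hPdef
    set S : ℝ := ∑ k, x k ^ 2 with hSdef
    have hPnn : 0 ≤ P := Finset.prod_nonneg fun k _ => xi1_nonneg σ (x k)
    have hSnn : 0 ≤ S := Finset.sum_nonneg fun k _ => sq_nonneg _
    have hPle : P ≤ B ^ n := by
      calc P ≤ ∏ _k : Fin n, B :=
            Finset.prod_le_prod (fun k _ => xi1_nonneg σ (x k)) (fun k _ => hxiB (x k))
        _ = B ^ n := by simp
    have hPS : P * S ≤ n * B ^ n := by
      have key : ∀ k : Fin n, P * x k ^ 2 ≤ B ^ n := by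
        intro k
        have herase : xi1 σ (x k) * ∏ j ∈ Finset.univ.erase k, xi1 σ (x j) = P :=
          Finset.mul_prod_erase Finset.univ (fun j => xi1 σ (x j)) (Finset.mem_univ k)
        have hprodE : ∏ j ∈ Finset.univ.erase k, xi1 σ (x j) ≤ B ^ (n - 1) := by
          calc ∏ j ∈ Finset.univ.erase k, xi1 σ (x j)
              ≤ ∏ _j ∈ Finset.univ.erase k, B :=
                Finset.prod_le_prod (fun j _ => xi1_nonneg σ (x j)) (fun j _ => hxiB (x j))
            _ = B ^ (n - 1) := by
                rw [Finset.prod_const, Finset.card_erase_of_mem (Finset.mem_univ k)]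
                simp
        have hprodEnn : 0 ≤ ∏ j ∈ Finset.univ.erase k, xi1 σ (x j) :=
          Finset.prod_nonneg fun j _ => xi1_nonneg σ (x j)
        calc P * x k ^ 2
            = (xi1 σ (x k) * x k ^ 2) * ∏ j ∈ Finset.univ.erase k, xi1 σ (x j) := by
              rw [← herase]; ring
          _ ≤ B * B ^ (n - 1) :=
              mul_le_mul (hxi2B (x k)) hprodE hprodEnn hBpos.le
          _ = B ^ n := by
              rw [← pow_succ']
              congr 1
              omega
      calc P * S = ∑ k, P * x k ^ 2 := by rw [hSdef, Finset.mul_sum]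
        _ ≤ ∑ _k : Fin n, B ^ n := Finset.sum_le_sum fun k _ => key k
        _ = n * B ^ n := by simp
    have habs : |xiN n σ x| ≤ P * A2 + P * S := by
      unfold xiN
      rw [abs_mul, abs_of_nonneg hPnn]
      have : |A2 - S| ≤ A2 + S := by
        rw [abs_sub_le_iff]; constructor <;> linarith
      calc P * |A2 - S| ≤ P * (A2 + S) := mul_le_mul_of_nonneg_left this hPnn
        _ = P * A2 + P * S := by ring
    have h1 : P * A2 ≤ B ^ n * A2 := mul_le_mul_of_nonneg_right hPle hA2nonneg
    linarith
  · -- not identically zero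
    intro h
    have h0 := congrFun h 0
    simp only [Pi.zero_apply] at h0
    have hv : xiN n σ 0 > 0 := by
      unfold xiN
      have hc : Real.pi / σ ≠ 0 := ne_of_gt (div_pos hπ hσ)
      have hxi0 : xi1 σ 0 = (1 / (Real.pi / σ) ^ 2) ^ 2 := by
        unfold xi1
        rw [if_neg (fun he : (0:ℝ)^2 = (Real.pi/σ)^2 => pow_ne_zero 2 hc (by simpa using he.symm))]
        norm_num
      have hprod : (0:ℝ) < ∏ k : Fin n, xi1 σ ((0 : Fin n → ℝ) k) := by
        apply Finset.prod_pos
        intro k _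
        simp only [Pi.zero_apply]
        rw [hxi0]
        positivity
      have hsum : ∑ k : Fin n, ((0 : Fin n → ℝ) k) ^ 2 = 0 := by simp
      rw [hsum, sub_zero]
      have hA2pos : 0 < A2 := by
        rw [hA2]
        have : 0 < Real.sqrt n := Real.sqrt_pos.mpr (by exact_mod_cast hn)
        positivity
      exact mul_pos hprod hA2pos
    rw [h0] at hv
    exact lt_irrefl 0 hv
end
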